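/- Commute time identity: for any two vertices u, v of a finite connected graph G = (V,E), the expected commute time satisfies E_u[τ_v] + E_v[τ_u] = 2|E| · R_eff(u,v). -/

import Mathlib

open scoped Classical

noncomputable def dirichlet {V : Type*} [Fintype V] (G : SimpleGraph V) (f : V → ℝ) : ℝ :=
  (∑ x : V, ∑ y : V, if G.Adj x y then (f x - f y) ^ 2 else 0) / 2

/-- Effective resistance with unit conductances. -/
noncomputable def Reff {V : Type*} [Fintype V] (G : SimpleGraph V) (x y : V) : ℝ :=
  (sInf {E : ℝ | ∃ f : V → ℝ, f x = 1 ∧ f y = 0 ∧ dirichlet G f = E})⁻¹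

noncomputable def pathProb {V : Type*} [Fintype V] (p : V → V → ℝ) {t : ℕ}
    (w : Fin (t + 1) → V) : ℝ :=
  ∏ k : Fin t, p (w k.castSucc) (w k.succ)

noncomputable def eventProb {V : Type*} [Fintype V] (p : V → V → ℝ) (v : V) (t : ℕ)
    (P : (Fin (t + 1) → V) → Prop) : ℝ :=
  ∑ w : Fin (t + 1) → V, if w 0 = v ∧ P w then pathProb p w else 0

/-- One step of simple random walk on `G`. -/
noncomputable def stepProb {V : Type*} [Fintype V] (G : SimpleGraph V) (x y : V) : ℝ :=
  if G.Adj x y then ((Finset.univ.filter fun z => G.Adj x z).card : ℝ)⁻¹ else 0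

/-- Expected hitting time of the vertex `z` for the walk `p` started at `v`:
    E_v[τ_z] = ∑_{t ≥ 0} P_v(τ_z > t). -/
noncomputable def expHit {V : Type*} [Fintype V] (p : V → V → ℝ) (v z : V) : ℝ :=
  ∑' t : ℕ, eventProb p v t fun w => ∀ k, w k ≠ z

/-!
First-step analysis shows that the hitting-time profile `h_z(x) = E_x[τ_z]` satisfies
`L h_z = deg - 2|E| δ_z`, where `L` is the graph Laplacian. Hence `φ = (h_v - h_u) / 2|E|` solves
`L φ = δ_u - δ_v`: it is the potential of a unit current from `u` to `v`, and the Dirichlet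
principle (Cauchy–Schwarz for the form `f ↦ ⟨f, L f⟩`) gives
`R_eff(u, v) = φ(u) - φ(v) = (E_u[τ_v] + E_v[τ_u]) / 2|E|`.
The hitting times are finite because from every vertex `z` is hit within a fixed number `N` of
steps with probability bounded below, so `P_x(τ_z > t)` decays geometrically in `t / N`.
-/

theorem summable_pow_div {K : ℝ} (hK0 : 0 ≤ K) (hK1 : K < 1) (N : ℕ) [NeZero N] :
    Summable fun t : ℕ => K ^ (t / N) := by
  rw [← (Nat.divModEquiv N).symm.summable_iff]
  convert (summable_geometric_of_lt_one hK0 hK1).mul_of_nonneg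
    (Summable.of_finite (f := fun _ : Fin N => (1 : ℝ))) (fun k => pow_nonneg hK0 k)
    (fun _ => zero_le_one) using 1 with q
  ext ⟨k, i⟩
  simp [Nat.add_comm _ (i : ℕ), Nat.add_mul_div_right _ _ (Nat.pos_of_neZero N),
    Nat.div_eq_of_lt i.isLt]

section PathSpace

variable {V : Type*} [Fintype V] (p : V → V → ℝ)

theorem pathProb_cons {t : ℕ} (a : V) (g : Fin (t + 1) → V) :
    pathProb p (Fin.cons a g : Fin (t + 2) → V) = p a (g 0) * pathProb p g := by
  simp only [pathProb, Fin.prod_univ_succ, Fin.castSucc_zero, Fin.cons_zero, Fin.cons_succ,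
    ← Fin.succ_castSucc]

theorem eventProb_succ (x : V) (t : ℕ) (P : (Fin (t + 2) → V) → Prop) :
    eventProb p x (t + 1) P = ∑ y, p x y * eventProb p y t fun g => P (Fin.cons x g) := by
  simp only [eventProb, Finset.mul_sum, mul_ite, mul_zero]
  rw [Finset.sum_comm, ← (Fin.consEquiv fun _ => V).sum_comp, Fintype.sum_prod_type,
    Fintype.sum_eq_single x fun a ha => Finset.sum_eq_zero fun g _ => by simp [ha]]
  refine Finset.sum_congr rfl fun g _ => ?_
  rw [Fintype.sum_eq_single (g 0) fun y hy => by simp [Ne.symm hy]]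
  simp [Fin.consEquiv, pathProb_cons]

/-- `survProb p x z t = P_x(τ_z > t)`, so that `expHit p x z = ∑' t, survProb p x z t`. -/
noncomputable def survProb (x z : V) (t : ℕ) : ℝ :=
  eventProb p x t fun w => ∀ k, w k ≠ z

theorem survProb_self (z : V) (t : ℕ) : survProb p z z t = 0 :=
  Finset.sum_eq_zero fun _ _ => if_neg fun h => h.2 0 h.1

theorem survProb_zero (x z : V) : survProb p x z 0 = if x = z then 0 else 1 := by
  split_ifs with h
  · exact h ▸ survProb_self p x 0
  · rw [survProb, eventProb, ← (Equiv.funUnique (Fin 1) V).symm.sum_comp,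
      Fintype.sum_eq_single x fun y hy => by simp [hy]]
    simp [h, pathProb]

theorem survProb_succ (x z : V) (t : ℕ) :
    survProb p x z (t + 1) = if x = z then 0 else ∑ y, p x y * survProb p y z t := by
  split_ifs with h
  · exact h ▸ survProb_self p x _
  · have hcons (g : Fin (t + 1) → V) : (∀ k, (Fin.cons x g : Fin (t + 2) → V) k ≠ z) ↔
        ∀ k, g k ≠ z := by
      rw [Fin.forall_fin_succ]
      simp [h]
    simp only [survProb, eventProb_succ, hcons]

theorem expHit_self (z : V) : expHit p z z = 0 := by
  change ∑' t, survProb p z z t = 0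
  simp [survProb_self]

end PathSpace

section Stochastic

open Matrix

variable {V : Type*} [Fintype V] {p : V → V → ℝ}

theorem survProb_nonneg (hp : 0 ≤ p) (x z : V) (t : ℕ) : 0 ≤ survProb p x z t :=
  Finset.sum_nonneg fun w _ => by
    split_ifs
    exacts [Finset.prod_nonneg fun _ _ => hp _ _, le_rfl]

theorem survProb_le_one (hp : p ∈ rowStochastic ℝ V) (x z : V) (t : ℕ) :
    survProb p x z t ≤ 1 := by
  induction t generalizing x with
  | zero => rw [survProb_zero]; split_ifs <;> norm_num
  | succ t ih =>
    rw [survProb_succ]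
    split_ifs
    · exact zero_le_one
    · calc ∑ y, p x y * survProb p y z t ≤ ∑ y, p x y :=
            Finset.sum_le_sum fun y _ =>
              mul_le_of_le_one_right (nonneg_of_mem_rowStochastic hp) (ih y)
        _ = 1 := sum_row_of_mem_rowStochastic hp x

/-- Markov property at time `t`. -/
theorem survProb_add_le_mul (hp : 0 ≤ p) {z : V} {N : ℕ} {K : ℝ} (hK : ∀ y, survProb p y z N ≤ K)
    (x : V) (t : ℕ) : survProb p x z (t + N) ≤ K * survProb p x z t := by
  induction t generalizing x with
  | zero =>
    rw [survProb_zero, zero_add]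
    split_ifs with h
    · rw [h, survProb_self, mul_zero]
    · rw [mul_one]; exact hK x
  | succ t ih =>
    rw [Nat.add_right_comm, survProb_succ, survProb_succ]
    split_ifs
    · rw [mul_zero]
    · rw [Finset.mul_sum]
      refine Finset.sum_le_sum fun y _ => ?_
      rw [mul_left_comm]
      exact mul_le_mul_of_nonneg_left (ih y) (hp x y)

theorem survProb_antitone (hp : p ∈ rowStochastic ℝ V) (x z : V) :
    Antitone (survProb p x z) :=
  antitone_nat_of_succ_le fun t => by
    simpa using survProb_add_le_mul (fun _ _ => nonneg_of_mem_rowStochastic hp)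
      (fun y => survProb_le_one hp y z 1) x t

theorem survProb_le_pow_div (hp : p ∈ rowStochastic ℝ V) {z : V} {N : ℕ} {K : ℝ}
    (hK : ∀ y, survProb p y z N ≤ K) (x : V) (t : ℕ) : survProb p x z t ≤ K ^ (t / N) := by
  have hK0 : 0 ≤ K := survProb_self p z N ▸ hK z
  have hpow (k : ℕ) (x : V) : survProb p x z (k * N) ≤ K ^ k := by
    induction k generalizing x with
    | zero => rw [zero_mul, survProb_zero]; split_ifs <;> norm_num
    | succ k ih =>
      rw [Nat.succ_mul, pow_succ']
      exact (survProb_add_le_mul (fun _ _ => nonneg_of_mem_rowStochastic hp) hK x _).trans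
        (mul_le_mul_of_nonneg_left (ih x) hK0)
  exact (survProb_antitone hp x z (Nat.div_mul_le_self t N)).trans (hpow _ x)

theorem exists_survProb_lt_one (hp : p ∈ rowStochastic ℝ V) {x z : V}
    (hxz : Relation.ReflTransGen (fun x y => 0 < p x y) x z) : ∃ n, survProb p x z n < 1 := by
  induction hxz using Relation.ReflTransGen.head_induction_on with
  | refl => exact ⟨0, by simp [survProb_self]⟩
  | @head a b hab _ ih =>
    obtain ⟨n, hn⟩ := ih
    refine ⟨n + 1, ?_⟩
    rw [survProb_succ]
    split_ifs
    · exact zero_lt_one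
    · calc ∑ y, p a y * survProb p y z n < ∑ y, p a y :=
            Finset.sum_lt_sum
              (fun y _ => mul_le_of_le_one_right (nonneg_of_mem_rowStochastic hp)
                (survProb_le_one hp y z n))
              ⟨b, Finset.mem_univ b, mul_lt_of_lt_one_right hab hn⟩
        _ = 1 := sum_row_of_mem_rowStochastic hp a

theorem exists_forall_survProb_le_lt_one (hp : p ∈ rowStochastic ℝ V) {z : V}
    (hreach : ∀ x, Relation.ReflTransGen (fun x y => 0 < p x y) x z) :
    ∃ N K, N ≠ 0 ∧ K < 1 ∧ ∀ x, survProb p x z N ≤ K := by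
  choose n hn using fun x => exists_survProb_lt_one hp (hreach x)
  set N := Finset.univ.sup n + 1
  obtain ⟨x₀, -, hx₀⟩ := Finset.exists_max_image Finset.univ (fun x => survProb p x z N)
    ⟨z, Finset.mem_univ z⟩
  have hlt (x : V) : survProb p x z N < 1 :=
    (survProb_antitone hp x z (Nat.le_succ_of_le (Finset.le_sup (Finset.mem_univ x)))).trans_lt
      (hn x)
  exact ⟨N, _, Nat.add_one_ne_zero _, hlt x₀, fun x => hx₀ x (Finset.mem_univ x)⟩

theorem summable_survProb (hp : p ∈ rowStochastic ℝ V) {z : V}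
    (hreach : ∀ x, Relation.ReflTransGen (fun x y => 0 < p x y) x z) (x : V) :
    Summable (survProb p x z) := by
  obtain ⟨N, K, hN, hK1, hK⟩ := exists_forall_survProb_le_lt_one hp hreach
  have : NeZero N := ⟨hN⟩
  exact (summable_pow_div (survProb_self p z N ▸ hK z) hK1 N).of_nonneg_of_le
    (survProb_nonneg (fun _ _ => nonneg_of_mem_rowStochastic hp) x z)
    (survProb_le_pow_div hp hK x)

theorem expHit_eq_one_add {x z : V} (hs : ∀ y, Summable (survProb p y z)) (hxz : x ≠ z) :
    expHit p x z = 1 + ∑ y, p x y * expHit p y z := by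
  change ∑' t, survProb p x z t = 1 + ∑ y, p x y * ∑' t, survProb p y z t
  rw [(hs x).tsum_eq_zero_add, survProb_zero, if_neg hxz]
  simp only [survProb_succ, if_neg hxz, ← tsum_mul_left]
  rw [Summable.tsum_finsetSum fun y _ => (hs y).mul_left _]

end Stochastic

section Electrical

open Matrix SimpleGraph

variable {V : Type*} [Fintype V] (G : SimpleGraph V)

theorem dotProduct_lapMatrix_mulVec_comm (f g : V → ℝ) :
    f ⬝ᵥ (G.lapMatrix ℝ *ᵥ g) = g ⬝ᵥ (G.lapMatrix ℝ *ᵥ f) := by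
  rw [dotProduct_mulVec, ← mulVec_transpose, (isSymm_lapMatrix ℝ G).eq, dotProduct_comm]

theorem sum_lapMatrix_mulVec (f : V → ℝ) : ∑ x, (G.lapMatrix ℝ *ᵥ f) x = 0 := by
  rw [← one_dotProduct, dotProduct_lapMatrix_mulVec_comm, Pi.one_def,
    lapMatrix_mulVec_const_eq_zero, dotProduct_zero]

theorem dirichlet_eq_dotProduct (f : V → ℝ) : dirichlet G f = f ⬝ᵥ (G.lapMatrix ℝ *ᵥ f) := by
  rw [← toLinearMap₂'_apply', lapMatrix_toLinearMap₂', dirichlet]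

theorem dirichlet_nonneg (f : V → ℝ) : 0 ≤ dirichlet G f := by
  unfold dirichlet
  positivity

theorem dirichlet_affine (a b : ℝ) (f : V → ℝ) :
    dirichlet G (fun x => a * f x + b) = a ^ 2 * dirichlet G f := by
  simp only [dirichlet, Finset.mul_sum, mul_div_assoc', mul_ite, mul_zero]
  congr 1
  refine Finset.sum_congr rfl fun x _ => Finset.sum_congr rfl fun y _ => ?_
  split_ifs <;> ring

theorem sq_dotProduct_lapMatrix_mulVec_le (f g : V → ℝ) :
    (f ⬝ᵥ (G.lapMatrix ℝ *ᵥ g)) ^ 2 ≤ dirichlet G f * dirichlet G g := by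
  have hquad (s : ℝ) : 0 ≤ dirichlet G g * (s * s) + 2 * (f ⬝ᵥ (G.lapMatrix ℝ *ᵥ g)) * s +
      dirichlet G f := by
    have h := dirichlet_nonneg G (f + s • g)
    simp only [dirichlet_eq_dotProduct, mulVec_add, mulVec_smul, dotProduct_add, add_dotProduct, dotProduct_smul,
      smul_dotProduct, smul_eq_mul] at h ⊢
    rw [dotProduct_lapMatrix_mulVec_comm G g f] at h
    linarith
  have := discrim_le_zero hquad
  rw [discrim] at this
  linarith

/-- Dirichlet principle: `φ` is the potential of a unit current from `u` to `v`. -/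
theorem Reff_eq_of_lapMatrix_mulVec_eq {φ : V → ℝ} {u v : V}
    (hφ : G.lapMatrix ℝ *ᵥ φ = Pi.single u 1 - Pi.single v 1) : Reff G u v = φ u - φ v := by
  have hpair (f : V → ℝ) : f ⬝ᵥ (G.lapMatrix ℝ *ᵥ φ) = f u - f v := by
    simp [hφ, dotProduct_sub, dotProduct_single]
  set R := φ u - φ v
  have hR : dirichlet G φ = R := by rw [dirichlet_eq_dotProduct, hpair]
  have hlower {f : V → ℝ} (hfu : f u = 1) (hfv : f v = 0) : 1 ≤ dirichlet G f * R := by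
    simpa [hpair, hfu, hfv, hR] using sq_dotProduct_lapMatrix_mulVec_le G f φ
  rcases (hR ▸ dirichlet_nonneg G φ).eq_or_lt with hR0 | hRpos
  · have hempty : {E : ℝ | ∃ f : V → ℝ, f u = 1 ∧ f v = 0 ∧ dirichlet G f = E} = ∅ :=
      Set.eq_empty_of_forall_notMem fun E ⟨f, hfu, hfv, _⟩ => by
        have := hlower hfu hfv
        rw [← hR0, mul_zero] at this
        linarith
    rw [Reff, hempty, Real.sInf_empty, _root_.inv_zero, ← hR0]
  · have hleast : IsLeast {E : ℝ | ∃ f : V → ℝ, f u = 1 ∧ f v = 0 ∧ dirichlet G f = E} R⁻¹ := by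
      refine ⟨⟨fun x => R⁻¹ * φ x + -(R⁻¹ * φ v), ?_, by simp, ?_⟩, ?_⟩
      · field_simp
        ring
      · rw [dirichlet_affine, hR]
        field_simp
      · rintro E ⟨f, hfu, hfv, rfl⟩
        exact (inv_le_iff_one_le_mul₀ hRpos).2 (hlower hfu hfv)
    rw [Reff, hleast.csInf_eq, inv_inv]

end Electrical

section RandomWalk

open Matrix SimpleGraph

variable {V : Type*} [Fintype V] {G : SimpleGraph V}

theorem stepProb_eq (x y : V) :
    stepProb G x y = if G.Adj x y then (G.degree x : ℝ)⁻¹ else 0 := by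
  simp [stepProb, ← card_neighborFinset_eq_degree, neighborFinset_eq_filter]

theorem stepProb_pos_iff {x y : V} : 0 < stepProb G x y ↔ G.Adj x y := by
  rw [stepProb_eq]
  split_ifs with h
  · simp [h, h.degree_pos_left]
  · simp [h]

theorem stepProb_mem_rowStochastic (hdeg : ∀ x, 0 < G.degree x) :
    stepProb G ∈ rowStochastic ℝ V := by
  refine mem_rowStochastic_iff_sum.2 ⟨fun x y => ?_, fun x => ?_⟩
  · rw [stepProb_eq]
    positivity
  · simp only [stepProb_eq, Finset.sum_ite, Finset.sum_const, nsmul_eq_mul, mul_zero, add_zero,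
      ← neighborFinset_eq_filter, card_neighborFinset_eq_degree]
    exact mul_inv_cancel₀ (Nat.cast_ne_zero.2 (hdeg x).ne' : (G.degree x : ℝ) ≠ 0)

/-- Off `z` this is first-step analysis; at `z` the value is forced by `∑ₓ (L h)(x) = 0`. -/
theorem lapMatrix_mulVec_expHit (hG : G.Preconnected) [Nontrivial V] (z : V) :
    G.lapMatrix ℝ *ᵥ (fun x => expHit (stepProb G) x z) =
      (fun x => (G.degree x : ℝ)) - Pi.single z (∑ x, (G.degree x : ℝ)) := by
  have hdeg (x : V) : 0 < G.degree x := hG.degree_pos_of_nontrivial x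
  have hs (y : V) : Summable (survProb (stepProb G) y z) :=
    summable_survProb (stepProb_mem_rowStochastic hdeg)
      (fun x => Relation.ReflTransGen.mono (fun a b (hab : G.Adj a b) => stepProb_pos_iff.2 hab)
        _ _ ((reachable_iff_reflTransGen x z).1 (hG x z))) y
  have hoff {x : V} (hxz : x ≠ z) :
      (G.lapMatrix ℝ *ᵥ fun x => expHit (stepProb G) x z) x = G.degree x := by
    have hd : (G.degree x : ℝ) ≠ 0 := Nat.cast_ne_zero.2 (hdeg x).ne'
    rw [lapMatrix_mulVec_apply, expHit_eq_one_add hs hxz]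
    simp only [stepProb_eq, ite_mul, zero_mul, Finset.sum_ite, Finset.sum_const_zero, add_zero,
      ← neighborFinset_eq_filter, ← Finset.mul_sum]
    field_simp
    ring
  ext x
  rcases eq_or_ne x z with rfl | hxz
  · have hsum := sum_lapMatrix_mulVec G fun y => expHit (stepProb G) y x
    rw [← Finset.add_sum_erase _ _ (Finset.mem_univ x),
      Finset.sum_congr rfl fun y hy => hoff (Finset.ne_of_mem_erase hy)] at hsum
    rw [← Finset.add_sum_erase _ _ (Finset.mem_univ x)]
    simp only [Pi.sub_apply, Pi.single_eq_same]
    linarith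
  · simp [hoff hxz, hxz]

theorem sum_degree_pos (hG : G.Preconnected) [Nontrivial V] : 0 < ∑ x, (G.degree x : ℝ) :=
  Finset.sum_pos (fun x _ => Nat.cast_pos.2 (hG.degree_pos_of_nontrivial x)) Finset.univ_nonempty

theorem lapMatrix_mulVec_expHit_sub (hG : G.Preconnected) [Nontrivial V] (u v : V) :
    G.lapMatrix ℝ *ᵥ (fun x => (expHit (stepProb G) x v - expHit (stepProb G) x u) /
      ∑ y, (G.degree y : ℝ)) = Pi.single u 1 - Pi.single v 1 := by
  have hS := (sum_degree_pos hG).ne'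
  have hφ : (fun x => (expHit (stepProb G) x v - expHit (stepProb G) x u) / ∑ y, (G.degree y : ℝ))
      = (∑ y, (G.degree y : ℝ))⁻¹ •
        ((fun x => expHit (stepProb G) x v) - fun x => expHit (stepProb G) x u) := by
    ext x
    simp [div_eq_inv_mul]
  rw [hφ, mulVec_smul, mulVec_sub, lapMatrix_mulVec_expHit hG, lapMatrix_mulVec_expHit hG]
  ext x
  simp only [Pi.smul_apply, Pi.sub_apply, Pi.single_apply, smul_eq_mul]
  split_ifs <;> field_simp <;> ring

end RandomWalk

/-- commute time identity:
    E_u[τ_v] + E_v[τ_u] = 2|E|·R_eff(u,v). -/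
theorem commute_time_identity {V : Type*} [Fintype V] [DecidableEq V]
    (G : SimpleGraph V) (hconn : G.Connected) (u v : V) :
    expHit (stepProb G) u v + expHit (stepProb G) v u =
      2 * (G.edgeFinset.card : ℝ) * Reff G u v := by
  rcases eq_or_ne u v with rfl | huv
  · rw [expHit_self, Reff_eq_of_lapMatrix_mulVec_eq G (φ := 0) (by simp)]
    simp
  have : Nontrivial V := ⟨⟨u, v, huv⟩⟩
  have hm : ∑ x, (G.degree x : ℝ) = 2 * G.edgeFinset.card := by
    exact_mod_cast G.sum_degrees_eq_twice_card_edges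
  have hm0 : (0 : ℝ) < G.edgeFinset.card := by linarith [sum_degree_pos hconn.preconnected]
  rw [Reff_eq_of_lapMatrix_mulVec_eq G (lapMatrix_mulVec_expHit_sub hconn.preconnected u v), hm,
    expHit_self, expHit_self]
  field_simp
  ring
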